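/- For every functor T : Set ⥤ Set and every set a, there is an isomorphism ∫_{F ∈ App} ∫_{b ∈ Set} ((a → F b) → F (T b)) ≅ Σ_{n∈ℕ} aⁿ × T(Fin n), natural in T and a; that is, the end over all applicative functors F of the right Kan extension Ran_F(F ∘ T) evaluated at a is the set Σ_n aⁿ × T(n). -/

import Mathlib

/-!
An element `E` of the end is determined by its component at the free applicative functor
`FunList a b` on the generators `single : a → FunList a b b`: dinaturality in `F` along the
morphism `FunList.lift P k` out of the free applicative recovers every component `E.e P b k`.
Dinaturality in `b`, along the applicative morphisms `FunList.precomp f`, forces these generic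
values to share one shape `(n, v)` and makes their continuations `(Fin n → b) → T b` natural
in `b`, so by Yoneda they are `r ↦ T r t` for a single `t : T (Fin n)`. Conversely each
`(n, v, t)` gives the element that sequences `k ∘ v` and applies `T` to the result; testing it
at the free applicative recovers `(n, v, t)`.
-/

open CategoryTheory

/-- An applicative functor: a lax monoidal endofunctor of `(Set, ×)`. -/
structure AppFunctor where
  /-- the underlying endofunctor of `Set` -/
  F : Type ⥤ Type
  /-- the unit `1 ⟶ F 1` of the lax monoidal structure -/
  unit : Unit → F.obj Unit
  /-- the multiplication (tensorator) `F X × F Y ⟶ F (X × Y)` -/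
  mult : ∀ X Y : Type, F.obj X × F.obj Y → F.obj (X × Y)
  mult_natural : ∀ {X X' Y Y' : Type} (f : X → X') (g : Y → Y') (x : F.obj X) (y : F.obj Y),
    F.map (TypeCat.ofHom (Prod.map f g)) (mult X Y (x, y)) =
      mult X' Y' (F.map (TypeCat.ofHom f) x, F.map (TypeCat.ofHom g) y)
  mult_assoc : ∀ (X Y Z : Type) (x : F.obj X) (y : F.obj Y) (z : F.obj Z),
    F.map (TypeCat.ofHom (fun p => (p.1.1, (p.1.2, p.2))))
        (mult (X × Y) Z (mult X Y (x, y), z)) = mult X (Y × Z) (x, mult Y Z (y, z))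
  left_unit : ∀ (X : Type) (x : F.obj X),
    F.map (TypeCat.ofHom Prod.snd) (mult Unit X (unit Unit.unit, x)) = x
  right_unit : ∀ (X : Type) (x : F.obj X),
    F.map (TypeCat.ofHom Prod.fst) (mult X Unit (x, unit Unit.unit)) = x

/-- A morphism of applicative functors: a monoidal natural transformation. -/
structure AppHom (P Q : AppFunctor) where
  /-- the underlying natural transformation -/
  η : P.F ⟶ Q.F
  unit_comm : ∀ u : Unit, η.app Unit (P.unit u) = Q.unit u
  mult_comm : ∀ (X Y : Type) (x : P.F.obj X) (y : P.F.obj Y),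
    η.app (X × Y) (P.mult X Y (x, y)) = Q.mult X Y (η.app X x, η.app Y y)

/-- The end `∫_{F ∈ App} ∫_{b ∈ Set} ((a → F b) → F (T b)) = ∫_{F ∈ App} Ran_F (F ∘ T) (a)`:
families of maps `(a → F b) → F (T b)`, dinatural in `b ∈ Set` and in `F ∈ App`. -/
structure TraversalEnd (T : Type ⥤ Type) (a : Type) where
  /-- the underlying family of the end -/
  e : ∀ (P : AppFunctor) (b : Type), (a → P.F.obj b) → P.F.obj (T.obj b)
  dinat_inner : ∀ (P : AppFunctor) {b b' : Type} (f : b → b') (k : a → P.F.obj b),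
    P.F.map (T.map (TypeCat.ofHom f)) (e P b k) = e P b' (fun x => P.F.map (TypeCat.ofHom f) (k x))
  dinat_outer : ∀ (P Q : AppFunctor) (φ : AppHom P Q) (b : Type) (k : a → P.F.obj b),
    φ.η.app (T.obj b) (e P b k) = e Q b (fun x => φ.η.app b (k x))
namespace CategoryTheory.Functor

variable (G : Type ⥤ Type) {X Y Z : Type}

theorem map_ofHom_map_ofHom (f : X → Y) (g : Y → Z) (x : G.obj X) :
    G.map (↾g) (G.map (↾f) x) = G.map (↾(g ∘ f)) x :=
  (G.map_comp_apply (↾f) (↾g) x).symm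

theorem map_ofHom_id (x : G.obj X) : G.map (↾(id : X → X)) x = x :=
  G.map_id_apply X x

theorem map_ofHom_congr {f g : X → Y} (h : ∀ v, f v = g v) (x : G.obj X) :
    G.map (↾f) x = G.map (↾g) x := by
  rw [funext h]

end CategoryTheory.Functor

theorem Fin.comp_append {α β : Type} {m n : ℕ} (g : α → β) (u : Fin m → α)
    (v : Fin n → α) :
    g ∘ Fin.append u v = Fin.append (g ∘ u) (g ∘ v) := by
  funext i
  refine Fin.addCases (fun i => ?_) (fun i => ?_) i <;> simp

namespace AppFunctor

variable (P : AppFunctor) {β β' : Type}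

theorem mult_map_left {X X' Y : Type} (f : X → X') (x : P.F.obj X) (y : P.F.obj Y) :
    P.mult _ _ (P.F.map (↾f) x, y) = P.F.map (↾(Prod.map f id)) (P.mult _ _ (x, y)) := by
  rw [P.mult_natural, Functor.map_ofHom_id]

theorem mult_map_right {X Y Y' : Type} (g : Y → Y') (x : P.F.obj X) (y : P.F.obj Y) :
    P.mult _ _ (x, P.F.map (↾g) y) = P.F.map (↾(Prod.map id g)) (P.mult _ _ (x, y)) := by
  rw [P.mult_natural, Functor.map_ofHom_id]

def sequence (β : Type) : ∀ n : ℕ, (Fin n → P.F.obj β) → P.F.obj (Fin n → β)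
  | 0, _ => P.F.map (↾fun _ => Fin.elim0) (P.unit ())
  | n + 1, c => P.F.map (↾fun p => Fin.snoc p.1 p.2)
      (P.mult _ _ (sequence β n (Fin.init c), c (Fin.last n)))

theorem map_sequence (f : β → β') (n : ℕ) (c : Fin n → P.F.obj β) :
    P.F.map (↾(f ∘ ·)) (P.sequence β n c) =
      P.sequence β' n (fun i => P.F.map (↾f) (c i)) := by
  induction n with
  | zero =>
    rw [sequence, sequence, Functor.map_ofHom_map_ofHom]
    refine P.F.map_ofHom_congr (fun _ => ?_) _
    exact funext fun i => i.elim0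
  | succ n ih =>
    have h_init :
        Fin.init (fun i => P.F.map (↾f) (c i)) = fun i => P.F.map (↾f) (Fin.init c i) := rfl
    rw [sequence, sequence, h_init, ← ih, ← P.mult_natural, Functor.map_ofHom_map_ofHom,
      Functor.map_ofHom_map_ofHom]
    refine P.F.map_ofHom_congr (fun p => ?_) _
    exact Fin.comp_snoc f p.1 p.2

theorem sequence_append {n : ℕ} (c₁ : Fin n → P.F.obj β) :
    ∀ {m : ℕ} (c₂ : Fin m → P.F.obj β), P.sequence β (n + m) (Fin.append c₁ c₂) =
      P.F.map (↾fun p => Fin.append p.1 p.2)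
        (P.mult _ _ (P.sequence β n c₁, P.sequence β m c₂))
  | 0, c₂ => by
    have h : Fin.append c₁ c₂ = c₁ := funext fun i => Fin.append_left c₁ c₂ i
    show P.sequence β n _ = _
    rw [h]
    conv_lhs => rw [← P.right_unit _ (P.sequence β n c₁)]
    conv_rhs => rw [sequence, mult_map_right, Functor.map_ofHom_map_ofHom]
    refine P.F.map_ofHom_congr (fun p => ?_) _
    exact (funext fun i => Fin.append_left _ _ i).symm
  | m + 1, c₂ => by
    obtain ⟨c₂, y, rfl⟩ : ∃ c y, c₂ = Fin.snoc c y :=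
      ⟨_, _, (Fin.snoc_init_self c₂).symm⟩
    show P.sequence β (n + m + 1) _ = _
    rw [Fin.append_snoc]
    simp only [sequence, Fin.init_snoc, Nat.add_eq, Fin.snoc_last]
    rw [sequence_append c₁ c₂, mult_map_left, Functor.map_ofHom_map_ofHom, mult_map_right,
      Functor.map_ofHom_map_ofHom, ← P.mult_assoc, Functor.map_ofHom_map_ofHom]
    refine P.F.map_ofHom_congr (fun p => ?_) _
    exact (Fin.append_snoc _ _ _).symm

end AppFunctor

theorem AppHom.app_sequence {P Q : AppFunctor} (φ : AppHom P Q) (β : Type) (n : ℕ)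
    (c : Fin n → P.F.obj β) :
    φ.η.app _ (P.sequence β n c) = Q.sequence β n (fun i => φ.η.app β (c i)) := by
  induction n with
  | zero => rw [AppFunctor.sequence, NatTrans.naturality_apply, φ.unit_comm]; rfl
  | succ n ih => rw [AppFunctor.sequence, NatTrans.naturality_apply, φ.mult_comm, ih]; rfl

/-- The carrier of the free applicative functor on `X ↦ a × (b → X)`
(van Laarhoven's `FunList`). -/
abbrev FunList (a b X : Type) : Type := Σ n : ℕ, (Fin n → a) × ((Fin n → b) → X)

namespace FunList

variable {a b X : Type}

theorem ext_iff {x y : FunList a b X} :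
    x = y ↔ ∃ h : x.1 = y.1, (∀ i, x.2.1 (Fin.cast h.symm i) = y.2.1 i) ∧
      ∀ r, x.2.2 (fun i => r (Fin.cast h i)) = y.2.2 r := by
  obtain ⟨n, v, g⟩ := x
  obtain ⟨n', v', g'⟩ := y
  constructor
  · rintro ⟨⟩
    exact ⟨rfl, fun _ => rfl, fun _ => rfl⟩
  · rintro ⟨h, hv, hg⟩
    obtain rfl : n = n' := h
    exact congrArg _ (Prod.ext (funext hv) (funext hg))

theorem ext {x y : FunList a b X} (h : x.1 = y.1) (hv : ∀ i, x.2.1 (Fin.cast h.symm i) = y.2.1 i)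
    (hg : ∀ r, x.2.2 (fun i => r (Fin.cast h i)) = y.2.2 r) : x = y :=
  ext_iff.2 ⟨h, hv, hg⟩

variable (a b) in
abbrev appFunctor : AppFunctor where
  F :=
    { obj := FunList a b
      map f := ↾fun x => ⟨x.1, x.2.1, fun r => f (x.2.2 r)⟩
      map_id _ := rfl
      map_comp _ _ := rfl }
  unit u := ⟨0, Fin.elim0, fun _ => u⟩
  mult _ _ p := ⟨p.1.1 + p.2.1, Fin.append p.1.2.1 p.2.2.1,
    fun r => (p.1.2.2 (fun i => r (Fin.castAdd _ i)), p.2.2.2 (fun i => r (Fin.natAdd _ i)))⟩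
  mult_natural _ _ _ _ := rfl
  mult_assoc := by
    rintro X Y Z ⟨n, v, g⟩ ⟨m, w, h⟩ ⟨p, u, l⟩
    refine ext (Nat.add_assoc n m p) (fun i => ?_) (fun r => ?_)
    · show Fin.append (Fin.append v w) u _ = _
      rw [Fin.append_assoc]
      rfl
    · show (g _, h _, l _) = (g _, h _, l _)
      congr 3
      funext i
      exact congrArg r (Fin.ext (Nat.add_assoc n m i))
  left_unit := by
    rintro X ⟨n, v, g⟩
    refine ext (Nat.zero_add n) (fun i => ?_) (fun r => ?_)
    · show Fin.append Fin.elim0 v _ = _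
      simp
    · exact congrArg g (funext fun i => congrArg r (Fin.ext (by simp)))
  right_unit := by
    rintro X ⟨n, v, g⟩
    refine ext (Nat.add_zero n) (fun i => ?_) (fun r => ?_)
    · show Fin.append v Fin.elim0 _ = _
      simp
    · exact congrArg g (funext fun i => congrArg r (Fin.ext (by simp)))

def single (x : a) : FunList a b b := ⟨1, fun _ => x, fun r => r 0⟩

variable {b' : Type}

def lift (P : AppFunctor) (k : a → P.F.obj b) : AppHom (appFunctor a b) P where
  η :=
    { app X := ↾fun x => P.F.map (↾x.2.2) (P.sequence b x.1 (fun i => k (x.2.1 i)))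
      naturality X Y f := by
        ext x
        exact (P.F.map_ofHom_map_ofHom x.2.2 f _).symm }
  unit_comm u := by
    show P.F.map (↾fun _ => u) (P.F.map (↾fun _ => Fin.elim0) (P.unit ())) = P.unit u
    rw [Functor.map_ofHom_map_ofHom]
    exact P.F.map_ofHom_id _
  mult_comm := by
    rintro X Y ⟨n, v, g⟩ ⟨m, w, h⟩
    show P.F.map (↾fun r => (g fun i => r (Fin.castAdd m i), h fun i => r (Fin.natAdd n i)))
        (P.sequence b (n + m) (k ∘ Fin.append v w)) =
      P.mult _ _
        (P.F.map (↾g) (P.sequence b n (k ∘ v)), P.F.map (↾h) (P.sequence b m (k ∘ w)))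
    rw [Fin.comp_append, P.sequence_append, Functor.map_ofHom_map_ofHom, ← P.mult_natural]
    refine P.F.map_ofHom_congr (fun p => ?_) _
    show (g _, h _) = (g p.1, h p.2)
    simp only [Fin.append_left, Fin.append_right]

theorem lift_app_single (P : AppFunctor) (k : a → P.F.obj b) (x : a) :
    (lift P k).η.app b (single x) = k x := by
  show P.F.map (↾fun r : Fin 1 → b => r 0) (P.F.map (↾fun p => Fin.snoc p.1 p.2)
    (P.mult _ _ (P.F.map (↾fun _ => Fin.elim0) (P.unit ()), k x))) = k x
  rw [P.mult_map_left, Functor.map_ofHom_map_ofHom, Functor.map_ofHom_map_ofHom]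
  conv_rhs => rw [← P.left_unit _ (k x)]
  rfl

def precomp (f : b → b') : AppHom (appFunctor a b') (appFunctor a b) where
  η := { app X := ↾fun x => ⟨x.1, x.2.1, fun r => x.2.2 (f ∘ r)⟩ }
  unit_comm _ := rfl
  mult_comm _ _ _ _ := rfl

theorem sequence_single (n : ℕ) (v : Fin n → a) :
    (appFunctor a b).sequence b n (fun i => single (v i)) = ⟨n, v, id⟩ := by
  induction n with
  | zero => exact ext rfl (fun i => i.elim0) (fun _ => funext fun i => i.elim0)
  | succ n ih =>
    simp only [AppFunctor.sequence]
    rw [show Fin.init (fun i => single (v i)) = fun i => single (Fin.init v i) from rfl, ih]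
    refine ext rfl (fun i => ?_) (fun r => ?_)
    · show Fin.append (Fin.init v) (fun _ => v (Fin.last n)) i = v i
      rw [Fin.append_right_eq_snoc, Fin.snoc_init_self]
    · exact Fin.snoc_init_self r

theorem lift_single_eq_id_app (x : FunList a b X) :
    (lift (appFunctor a b) single).η.app X x = x := by
  show (appFunctor a b).F.map (↾x.2.2) ((appFunctor a b).sequence b x.1 _) = x
  rw [sequence_single]
  rfl

end FunList

namespace TraversalEnd

variable {T : Type ⥤ Type} {a : Type}

variable (T) in
def tupleFunList (s : Σ n : ℕ, (Fin n → a) × T.obj (Fin n)) (b : Type) :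
    FunList a b (T.obj b) :=
  ⟨s.1, s.2.1, fun r => T.map (↾r) s.2.2⟩

def ofTuple (s : Σ n : ℕ, (Fin n → a) × T.obj (Fin n)) : TraversalEnd T a where
  e P b k := (FunList.lift P k).η.app _ (tupleFunList T s b)
  dinat_inner P b b' f k := by
    show P.F.map (↾(T.map (↾f))) (P.F.map (↾fun r : Fin s.1 → b => T.map (↾r) s.2.2)
        (P.sequence b s.1 fun i => k (s.2.1 i))) =
      P.F.map (↾fun r => T.map (↾r) s.2.2)
        (P.sequence b' s.1 fun i => P.F.map (↾f) (k (s.2.1 i)))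
    rw [← P.map_sequence, Functor.map_ofHom_map_ofHom, Functor.map_ofHom_map_ofHom]
    exact P.F.map_ofHom_congr (fun r => T.map_ofHom_map_ofHom r f s.2.2) _
  dinat_outer P Q φ b k := by
    show φ.η.app _ (P.F.map _ _) = _
    rw [NatTrans.naturality_apply, φ.app_sequence]
    rfl

def generic (E : TraversalEnd T a) (b : Type) : FunList a b (T.obj b) :=
  E.e (FunList.appFunctor a b) b FunList.single

theorem e_eq_lift_generic (E : TraversalEnd T a) (P : AppFunctor) (b : Type)
    (k : a → P.F.obj b) : E.e P b k = (FunList.lift P k).η.app _ (E.generic b) := by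
  rw [generic, E.dinat_outer]
  exact congrArg (E.e P b) (funext fun x => (FunList.lift_app_single P k x).symm)

theorem ext_of_generic {E E' : TraversalEnd T a} (h : ∀ b, E.generic b = E'.generic b) :
    E = E' := by
  have he : E.e = E'.e := by
    funext P b k
    rw [e_eq_lift_generic, e_eq_lift_generic, h]
  cases E
  cases E'
  cases he
  rfl

theorem generic_ofTuple (s : Σ n : ℕ, (Fin n → a) × T.obj (Fin n)) (b : Type) :
    (ofTuple s).generic b = tupleFunList T s b :=
  FunList.lift_single_eq_id_app _

theorem precomp_generic (E : TraversalEnd T a) {b b' : Type} (f : b → b') :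
    (FunList.precomp f).η.app _ (E.generic b') =
      (FunList.appFunctor a b).F.map (T.map (↾f)) (E.generic b) := by
  rw [generic, generic, E.dinat_outer, E.dinat_inner]
  rfl

theorem exists_generic_eq (E : TraversalEnd T a) :
    ∃ s, ∀ b, E.generic b = tupleFunList T s b := by
  have shape (b : Type) := FunList.ext_iff.1 (E.precomp_generic (Empty.elim : Empty → b))
  obtain ⟨hn, -⟩ := shape (Fin (E.generic Empty).1)
  refine ⟨⟨_, (E.generic Empty).2.1, (E.generic _).2.2 (Fin.cast hn)⟩, fun b => ?_⟩
  obtain ⟨hb, hv, -⟩ := shape b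
  refine FunList.ext hb hv (fun r => ?_)
  obtain ⟨_, _, hg⟩ := FunList.ext_iff.1 (E.precomp_generic r)
  exact hg (Fin.cast hn)

theorem ofTuple_injective : Function.Injective (ofTuple (T := T) (a := a)) := by
  rintro ⟨n, v, t⟩ ⟨n', v', t'⟩ h
  have h_gen := congrArg (fun E => E.generic (Fin n)) h
  simp only [generic_ofTuple] at h_gen
  obtain ⟨hn, hv, ht⟩ := FunList.ext_iff.1 h_gen
  obtain rfl : n = n' := hn
  obtain rfl : v = v' := funext hv
  have ht_id : T.map (↾id) t = T.map (↾id) t' := ht id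
  rw [T.map_ofHom_id, T.map_ofHom_id] at ht_id
  rw [ht_id]

theorem ofTuple_surjective : Function.Surjective (ofTuple (T := T) (a := a)) := by
  intro E
  obtain ⟨s, hs⟩ := E.exists_generic_eq
  exact ⟨s, ext_of_generic fun b => (generic_ofTuple s b).trans (hs b).symm⟩

end TraversalEnd

/-- `∫_{F ∈ App} Ran_F (F ∘ T) (a) ≅ Σₙ aⁿ × T (Fin n)`, for every `T : Set ⥤ Set` and
every set `a`. -/
theorem end_of_ran_applicatives (T : Type ⥤ Type) (a : Type) :
    Nonempty (TraversalEnd T a ≃ Σ n : ℕ, (Fin n → a) × T.obj (Fin n)) :=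
  ⟨(Equiv.ofBijective _
    ⟨TraversalEnd.ofTuple_injective, TraversalEnd.ofTuple_surjective⟩).symm⟩
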